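/- arXiv:1711.07255 — 2 statements merged into one kernel-verified Lean document; each statement's English description precedes it below -/
import Mathlib

section
/- There is no neighborhood U of P₀ in the symplectic group Sp(ℝ⁴) such that every S ∈ U with det(S − I₄) > 0 and tr(S) < 4 is elliptic. Equivalently: for every δ > 0 there exists a symplectic matrix S with ‖S − P₀‖ < δ, det(S − I₄) > 0, tr(S) < 4, and S not elliptic. -/
open Matrix

/-- The standard 4×4 symplectic matrix `J = [[0, I₂],[-I₂, 0]]`. -/
noncomputable def Jmat : Matrix (Fin 4) (Fin 4) ℝ :=
  !![0, 0, 1, 0;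
     0, 0, 0, 1;
     -1, 0, 0, 0;
     0, -1, 0, 0]

/-- `A_ε = [[1, -ε],[ε, 1]]`. -/
noncomputable def Aeps (ε : ℝ) : Matrix (Fin 2) (Fin 2) ℝ := !![1, -ε; ε, 1]

/-- `B_ε = [[1, -ε],[0, 0]]`. -/
noncomputable def Beps (ε : ℝ) : Matrix (Fin 2) (Fin 2) ℝ := !![1, -ε; 0, 0]

/-- `C_ε = (1/(1+ε²))·[[1, -ε],[ε, 1]]`. -/
noncomputable def Ceps (ε : ℝ) : Matrix (Fin 2) (Fin 2) ℝ :=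
  !![1 / (1 + ε ^ 2), -ε / (1 + ε ^ 2); ε / (1 + ε ^ 2), 1 / (1 + ε ^ 2)]

/-- `P_ε = [[A_ε, B_ε],[0, C_ε]]` written out as a 4×4 matrix. -/
noncomputable def Peps (ε : ℝ) : Matrix (Fin 4) (Fin 4) ℝ :=
  !![1, -ε, 1, -ε;
     ε, 1, 0, 0;
     0, 0, 1 / (1 + ε ^ 2), -ε / (1 + ε ^ 2);
     0, 0, ε / (1 + ε ^ 2), 1 / (1 + ε ^ 2)]

attribute [local instance] Matrix.normedAddCommGroup

/-! Take `P_ε = [[A_ε, B_ε], [0, C_ε]]` with `ε = δ/2`. Since `C_ε = (A_εᵀ)⁻¹` and `A_εᵀ B_ε` is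
symmetric, `P_ε` is symplectic, and it lies within `ε` of `P₀` entrywise. Its determinant
`det (P_ε - 1) = ε⁴/(1+ε²)` and trace `2 + 2/(1+ε²)` satisfy the conditions, yet the
rotation-dilation block `A_ε` has the eigenvalue `1 + iε`, which lies off the unit circle. -/

theorem Matrix.mem_spectrum_of_mulVec_eq_smul {K n : Type*} [Field K] [Fintype n] [DecidableEq n]
    {A : Matrix n n K} {v : n → K} {μ : K} (hv : v ≠ 0) (h : A *ᵥ v = μ • v) :
    μ ∈ spectrum K A := by
  rw [← Matrix.spectrum_toLin']
  exact (Module.End.hasEigenvalue_of_hasEigenvector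
    ⟨Module.End.mem_eigenspace_iff.2 (by simpa using h), hv⟩).mem_spectrum

def IsElliptic {n : Type*} [Fintype n] [DecidableEq n] (S : Matrix n n ℝ) : Prop :=
  ∀ lam ∈ spectrum ℂ (S.map (algebraMap ℝ ℂ)), ‖lam‖ = 1 ∧ lam ≠ 1 ∧ lam ≠ -1

lemma Peps_transpose_mul_Jmat_mul_Peps (ε : ℝ) : (Peps ε)ᵀ * Jmat * Peps ε = Jmat := by
  have h : (1 : ℝ) + ε ^ 2 ≠ 0 := by positivity
  ext i j
  fin_cases i <;> fin_cases j <;>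
    simp [Jmat, Peps, Matrix.mul_apply, Fin.sum_univ_four] <;> field_simp <;> ring

lemma det_Peps_sub_one (ε : ℝ) : (Peps ε - 1).det = ε ^ 4 / (1 + ε ^ 2) := by
  have h : (1 : ℝ) + ε ^ 2 ≠ 0 := by positivity
  rw [Matrix.det_succ_row_zero]
  simp [Peps, Fin.sum_univ_succ, Matrix.det_fin_three, Matrix.one_apply, Fin.succAbove]
  field_simp
  ring

lemma trace_Peps (ε : ℝ) : (Peps ε).trace = 2 + 2 / (1 + ε ^ 2) := by
  simp [Peps, Matrix.trace, Fin.sum_univ_four]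
  ring

lemma Peps_map_mulVec (ε : ℝ) :
    (Peps ε).map (algebraMap ℝ ℂ) *ᵥ ![1, -Complex.I, 0, 0] =
      (1 + ε * Complex.I) • ![1, -Complex.I, 0, 0] := by
  ext i
  fin_cases i <;> simp [Peps, Matrix.mulVec, dotProduct, Fin.sum_univ_four]
  linear_combination (ε : ℂ) * Complex.I_sq

lemma norm_Peps_sub_Peps_zero_le {ε : ℝ} (hε : 0 ≤ ε) : ‖Peps ε - Peps 0‖ ≤ ε := by
  have h : (0 : ℝ) < 1 + ε ^ 2 := by positivity
  have h₁ : ε / (1 + ε ^ 2) ≤ ε := div_le_self hε (by nlinarith)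
  have h₂ : |(1 + ε ^ 2)⁻¹ - 1| ≤ ε := by
    have : (1 + ε ^ 2)⁻¹ - 1 = -(ε * (ε / (1 + ε ^ 2))) := by field_simp; ring
    rw [this, abs_neg, abs_of_nonneg (by positivity)]
    exact mul_le_of_le_one_right hε ((div_le_one h).2 (by nlinarith))
  rw [Matrix.norm_le_iff hε]
  intro i j
  fin_cases i <;> fin_cases j <;> simp [Peps, hε, abs_of_nonneg hε, abs_of_pos h, h₁, h₂]

lemma not_isElliptic_Peps {ε : ℝ} (hε : ε ≠ 0) : ¬ IsElliptic (Peps ε) := by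
  intro h
  have hv : ![1, -Complex.I, 0, 0] ≠ 0 := fun hv => one_ne_zero (congrFun hv 0)
  have hnorm := (h _ (Matrix.mem_spectrum_of_mulVec_eq_smul hv (Peps_map_mulVec ε))).1
  rw [show (1 : ℂ) = (1 : ℝ) by simp, Complex.norm_add_mul_I, Real.sqrt_eq_one] at hnorm
  exact hε (by nlinarith)

/-- For every `δ > 0` there is a symplectic matrix `S` with `‖S − P₀‖ < δ`,
`det(S − I₄) > 0`, `tr S < 4`, and `S` not elliptic.  Hence no neighborhood `U` of
`P₀` in `Sp(ℝ⁴)` is such that conditions (2) imply ellipticity on `U`. -/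
theorem stmt10 (δ : ℝ) (hδ : 0 < δ) :
    ∃ S : Matrix (Fin 4) (Fin 4) ℝ,
      Sᵀ * Jmat * S = Jmat ∧
      ‖S - Peps 0‖ < δ ∧
      0 < (S - 1).det ∧
      S.trace < 4 ∧
      ¬ (∀ lam ∈ spectrum ℂ (S.map (algebraMap ℝ ℂ)),
          ‖lam‖ = 1 ∧ lam ≠ 1 ∧ lam ≠ -1) := by
  have hε : 0 < δ / 2 := half_pos hδ
  refine ⟨Peps (δ / 2), Peps_transpose_mul_Jmat_mul_Peps _,
    (norm_Peps_sub_Peps_zero_le hε.le).trans_lt (half_lt_self hδ), ?_, ?_,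
    not_isElliptic_Peps hε.ne'⟩
  · rw [det_Peps_sub_one]
    positivity
  · rw [trace_Peps]
    linarith [div_lt_self two_pos (lt_add_of_pos_right 1 (pow_pos hε 2))]
end

section
/- The matrix P₀ admits no invariant Lagrangian splitting: there do not exist two-dimensional subspaces U₀, V₀ of ℝ⁴ with ℝ⁴ = U₀ ⊕ V₀, both U₀ and V₀ Lagrangian with respect to ω(u,w) = uᵀ J w, and both invariant under P₀. -/
/-!
`P₀ - 1` sends `w` to `(w₂, 0, 0, 0)`, so `ω((P₀ - 1) w, w) = w₂²`. On a `P₀`-invariant Lagrangian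
subspace `W` both `w` and `(P₀ - 1) w` lie in `W`, hence `w₂ = 0` throughout `W`. Two such subspaces
therefore span at most the hyperplane `w₂ = 0` and cannot be complementary.
-/

open Matrix

theorem Matrix.sub_self_dotProduct_mulVec_eq_zero {R n : Type*} [CommRing R] [Fintype n]
    (P B : Matrix n n R) (W : Submodule R (n → R))
    (hiso : ∀ w₁ ∈ W, ∀ w₂ ∈ W, w₁ ⬝ᵥ B *ᵥ w₂ = 0) (hinv : ∀ w ∈ W, P *ᵥ w ∈ W)
    {w : n → R} (hw : w ∈ W) :
    (P *ᵥ w - w) ⬝ᵥ B *ᵥ w = 0 :=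
  hiso _ (W.sub_mem (hinv w hw) hw) w hw

theorem Peps_zero_sub_self_dotProduct_Jmat_mulVec (w : Fin 4 → ℝ) :
    (Peps 0 *ᵥ w - w) ⬝ᵥ Jmat *ᵥ w = w 2 ^ 2 := by
  simp [Peps, Jmat, mulVec, dotProduct, Fin.sum_univ_four, sq]

theorem le_ker_proj_two_of_isotropic_of_Peps_zero_invariant (W : Submodule ℝ (Fin 4 → ℝ))
    (hiso : ∀ w₁ ∈ W, ∀ w₂ ∈ W, w₁ ⬝ᵥ Jmat *ᵥ w₂ = 0) (hinv : ∀ w ∈ W, Peps 0 *ᵥ w ∈ W) :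
    W ≤ LinearMap.ker (LinearMap.proj 2) := fun w hw => by
  have h := sub_self_dotProduct_mulVec_eq_zero _ _ W hiso hinv hw
  rw [Peps_zero_sub_self_dotProduct_Jmat_mulVec] at h
  exact pow_eq_zero_iff two_ne_zero |>.mp h

/-- `P₀` admits no invariant Lagrangian splitting of `ℝ⁴`. -/
theorem stmt14 :
    ¬ ∃ U V : Submodule ℝ (Fin 4 → ℝ),
        Module.finrank ℝ U = 2 ∧ Module.finrank ℝ V = 2 ∧
        IsCompl U V ∧
        (∀ u₁ ∈ U, ∀ u₂ ∈ U, u₁ ⬝ᵥ Jmat.mulVec u₂ = 0) ∧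
        (∀ w₁ ∈ V, ∀ w₂ ∈ V, w₁ ⬝ᵥ Jmat.mulVec w₂ = 0) ∧
        (∀ u ∈ U, (Peps 0).mulVec u ∈ U) ∧
        (∀ w ∈ V, (Peps 0).mulVec w ∈ V) := by
  rintro ⟨U, V, -, -, hcompl, hisoU, hisoV, hinvU, hinvV⟩
  have hsup : U ⊔ V ≤ LinearMap.ker (LinearMap.proj 2) :=
    sup_le (le_ker_proj_two_of_isotropic_of_Peps_zero_invariant U hisoU hinvU)
      (le_ker_proj_two_of_isotropic_of_Peps_zero_invariant V hisoV hinvV)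
  rw [hcompl.sup_eq_top] at hsup
  have h := hsup (Submodule.mem_top (x := Pi.single 2 1))
  simp at h
end
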